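/- Lemma 3.2: Let c : [0,∞) → ℝ^d_{>0} and define P(x,t) := ∏_{i=1}^d e^{−c_i(t)} c_i(t)^{x_i}/x_i!. Then P solves the chemical master equation if and only if c is differentiable, c satisfies the mass-action ODE c'(t) = Σ_k κ_k c(t)^{y_k} ζ_k, and for all x ∈ ℤ^d_{≥0} and all t ≥ 0, Σ_k κ_k c(t)^{y_k} [g_{x,c(t)}(y'_k) − g_{x,c(t)}(y_k)] = 0. Moreover, for any x ∈ ℤ^d_{≥0}, c ∈ ℝ^d_{>0}, and z ∈ ℤ^d_{≥0} with ‖z‖₁ ≤ 1, one has g_{x,c}(z) = 0. -/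

import Mathlib

open Finset

/-- Monomial `u^v = ∏ i, u i ^ v i` (with the convention `0^0 = 1`). -/
noncomputable def monPow {d : ℕ} (u : Fin d → ℝ) (v : Fin d → ℕ) : ℝ :=
  ∏ i, u i ^ v i

/-- The reaction vector `ζ = y' - y`, viewed as a real vector. -/
def zetaVec {d : ℕ} (y y' : Fin d → ℕ) : Fin d → ℝ :=
  fun i => (y' i : ℝ) - (y i : ℝ)

/-- Stochastic mass action intensity `λ_k(x) = κ_k ∏_i x_i!/(x_i - y_{ki})!`,
taken to be `0` when `x` is not componentwise at least `y_k`. -/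
noncomputable def intensity {d : ℕ} (κk : ℝ) (yk : Fin d → ℕ) (x : Fin d → ℕ) : ℝ :=
  κk * ∏ i, ((x i).descFactorial (yk i) : ℝ)

/-- Right-hand side of the deterministic mass-action ODE: `Σ_k κ_k c^{y_k} ζ_k`. -/
noncomputable def massActionRHS {d K : ℕ} (κ : Fin K → ℝ) (y y' : Fin K → Fin d → ℕ)
    (c : Fin d → ℝ) : Fin d → ℝ :=
  ∑ k, (κ k * monPow c (y k)) • zetaVec (y k) (y' k)

/-- `c` is differentiable on `[0,∞)` and solves the mass-action ODE there. -/
def solvesMassAction {d K : ℕ} (κ : Fin K → ℝ) (y y' : Fin K → Fin d → ℕ)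
    (c : ℝ → Fin d → ℝ) : Prop :=
  ∀ t ≥ (0:ℝ), HasDerivWithinAt c (massActionRHS κ y y' (c t)) (Set.Ici 0) t

/-- The dynamical and restricted (DR) complex balance condition: for every complex `z`
with `‖z‖₁ ≥ 2` and every `t ≥ 0`,
`Σ_{k : y_k = z} κ_k c(t)^z = Σ_{k : y'_k = z} κ_k c(t)^{y_k}`. -/
def DRcondition {d K : ℕ} (κ : Fin K → ℝ) (y y' : Fin K → Fin d → ℕ)
    (c : ℝ → Fin d → ℝ) : Prop :=
  ∀ z : Fin d → ℕ, 2 ≤ ∑ i, z i → ∀ t ≥ (0:ℝ),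
    ∑ k ∈ univ.filter (fun k => y k = z), κ k * monPow (c t) z
      = ∑ k ∈ univ.filter (fun k => y' k = z), κ k * monPow (c t) (y k)

/-- `P` solves the chemical master equation on `[0,∞)`:
`∂ₜ P(x,t) = Σ_k λ_k(x-ζ_k) P(x-ζ_k,t) 1{x-ζ_k ≥ 0} - Σ_k λ_k(x) P(x,t)`. -/
def solvesCME {d K : ℕ} (κ : Fin K → ℝ) (y y' : Fin K → Fin d → ℕ)
    (P : (Fin d → ℕ) → ℝ → ℝ) : Prop :=
  ∀ x : Fin d → ℕ, ∀ t ≥ (0:ℝ),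
    HasDerivWithinAt (P x)
      ((∑ k, if ∀ i, y' k i ≤ x i + y k i then
          intensity (κ k) (y k) (fun i => x i + y k i - y' k i)
            * P (fun i => x i + y k i - y' k i) t
        else 0)
       - ∑ k, intensity (κ k) (y k) x * P x t)
      (Set.Ici 0) t

/-- The product-Poisson probability mass function `∏_i e^{-c_i} c_i^{x_i}/x_i!`. -/
noncomputable def productPoisson {d : ℕ} (c : Fin d → ℝ) (x : Fin d → ℕ) : ℝ :=
  ∏ i, Real.exp (-(c i)) * (c i) ^ (x i) / (x i).factorial

/-- The function `g_{x,c}(z) = Σ_j (x_j/c_j - 1) z_j - (x!/(x-z)!) c^{-z} + 1` from Lemma 3.2. -/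
noncomputable def gFun {d : ℕ} (x : Fin d → ℕ) (c : Fin d → ℝ) (z : Fin d → ℕ) : ℝ :=
  (∑ j, ((x j : ℝ) / c j - 1) * (z j : ℝ))
    - (∏ j, ((x j).descFactorial (z j) : ℝ)) * (monPow c z)⁻¹ + 1

/-!
Dividing the CME by `P(x) = ∏ᵢ e^{-cᵢ} cᵢ^{xᵢ} / xᵢ!` turns both of its sides into functions of
`x`. Since `x^{(z)} P(x) = c^z P(x - z)` for the falling factorial `x^{(z)} = ∏ᵢ xᵢ!/(xᵢ - zᵢ)!`,
the right-hand side becomes `Σ_z n(z) x^{(z)} / c^z`, where `n(z)` is the net production rate of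
the complex `z` under deterministic mass action at `c`. The time derivative becomes
`Σᵢ cᵢ' (xᵢ/cᵢ - 1)`, the same kind of expression for the reactions `0 → eᵢ` at rates `cᵢ'`.
The falling factorials `x ↦ x^{(z)}` are linearly independent, so the CME forces these two net
productions to agree, and their first moments give `c' = Σ_k κ_k c^{y_k} ζ_k`. Finally
`g_{x,c}(z) = Σⱼ (xⱼ/cⱼ - 1) zⱼ - x^{(z)}/c^z + 1` shows that, once `c` solves the mass-action ODE,
the remaining content of the CME is `Σ_k κ_k c^{y_k} (g(y'_k) - g(y_k)) = 0`.
-/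

namespace ProductPoissonCME

section DescFactorialProd

variable {ι : Type*} [Fintype ι]

noncomputable def descFactorialProd (x z : ι → ℕ) : ℝ :=
  ∏ i, ((x i).descFactorial (z i) : ℝ)

lemma descFactorialProd_eq_zero_of_lt {x z : ι → ℕ} (i : ι) (h : x i < z i) :
    descFactorialProd x z = 0 :=
  Finset.prod_eq_zero (Finset.mem_univ i) (by simp [Nat.descFactorial_of_lt h])

lemma descFactorialProd_self_pos (z : ι → ℕ) : 0 < descFactorialProd z z :=
  Finset.prod_pos fun i _ => by simp [Nat.descFactorial_self, Nat.factorial_pos]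

/-- Evaluating a vanishing combination `l` at a point `z` of its support of least degree leaves
only `l z * z!`, since `descFactorialProd x w = 0` unless `w ≤ x`. -/
theorem linearIndependent_descFactorialProd :
    LinearIndependent ℝ (fun (z x : ι → ℕ) => descFactorialProd x z) := by
  rw [linearIndependent_iff]
  intro l hl
  by_contra hne
  obtain ⟨z, hz, hmin⟩ := l.support.exists_min_image (fun w => ∑ i, w i)
    (Finsupp.support_nonempty_iff.2 hne)
  have hvanish : ∀ w ∈ l.support, w ≠ z → l w * descFactorialProd z w = 0 := by
    intro w hw hwz
    obtain ⟨i, hi⟩ : ∃ i, z i < w i := by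
      by_contra! hle
      exact (hmin w hw).not_gt (Fintype.sum_strictMono (lt_of_le_of_ne hle hwz))
    rw [descFactorialProd_eq_zero_of_lt i hi, mul_zero]
  have hz0 := congrFun hl z
  simp only [Finsupp.linearCombination_apply, Finsupp.sum, Finset.sum_apply, Pi.smul_apply,
    smul_eq_mul, Pi.zero_apply] at hz0
  rw [Finset.sum_eq_single z hvanish (fun h => absurd hz h)] at hz0
  exact Finsupp.mem_support_iff.1 hz
    ((mul_eq_zero.1 hz0).resolve_right (descFactorialProd_self_pos z).ne')

lemma descFactorialProd_zero (x : ι → ℕ) : descFactorialProd x 0 = 1 := by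
  simp [descFactorialProd]

variable [DecidableEq ι]

lemma descFactorialProd_single_one (x : ι → ℕ) (i : ι) :
    descFactorialProd x (Pi.single i 1) = x i := by
  rw [descFactorialProd, Finset.prod_eq_single i (fun j _ hj => by simp [hj]) (by simp)]
  simp

lemma eq_zero_or_eq_single_one_of_sum_le_one {z : ι → ℕ} (hz : ∑ i, z i ≤ 1) :
    z = 0 ∨ ∃ i, z = Pi.single i 1 := by
  by_cases h0 : z = 0
  · exact Or.inl h0
  obtain ⟨i, hi⟩ := Function.ne_iff.1 h0
  have hsplit := Finset.add_sum_erase Finset.univ z (Finset.mem_univ i)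
  have hrest : ∀ j ∈ Finset.univ.erase i, z j = 0 :=
    Finset.sum_eq_zero_iff.1 (by simp at hi; omega)
  refine Or.inr ⟨i, funext fun j => ?_⟩
  by_cases hj : j = i
  · subst hj; simp at hi ⊢; omega
  · simp [hj, hrest j (Finset.mem_erase.2 ⟨hj, Finset.mem_univ j⟩)]

end DescFactorialProd

section Monomials

variable {d : ℕ}

lemma monPow_zero (c : Fin d → ℝ) : monPow c 0 = 1 := by
  simp [monPow]

lemma monPow_single_one (c : Fin d → ℝ) (i : Fin d) : monPow c (Pi.single i 1) = c i := by
  rw [monPow, Finset.prod_eq_single i (fun j _ hj => by simp [hj]) (by simp)]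
  simp

lemma monPow_ne_zero {c : Fin d → ℝ} (hc : ∀ i, c i ≠ 0) (z : Fin d → ℕ) : monPow c z ≠ 0 :=
  Finset.prod_ne_zero_iff.2 fun i _ => pow_ne_zero _ (hc i)

end Monomials

noncomputable def poissonWeight (c : ℝ) (n : ℕ) : ℝ :=
  Real.exp (-c) * c ^ n / n.factorial

lemma productPoisson_eq_prod {d : ℕ} (c : Fin d → ℝ) (x : Fin d → ℕ) :
    productPoisson c x = ∏ i, poissonWeight (c i) (x i) := rfl

lemma productPoisson_pos {d : ℕ} {c : Fin d → ℝ} (hc : ∀ i, 0 < c i) (x : Fin d → ℕ) :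
    0 < productPoisson c x :=
  Finset.prod_pos fun i _ => by have := hc i; positivity

lemma descFactorial_mul_poissonWeight (c : ℝ) {n a : ℕ} (h : a ≤ n) :
    n.descFactorial a * poissonWeight c n = c ^ a * poissonWeight c (n - a) := by
  have hfac : ((n - a).factorial : ℝ) * n.descFactorial a = n.factorial := by
    exact_mod_cast Nat.factorial_mul_descFactorial h
  have hd : (n.descFactorial a : ℝ) ≠ 0 := by exact_mod_cast (Nat.descFactorial_pos.2 h).ne'
  unfold poissonWeight
  rw [← hfac, ← pow_sub_mul_pow c h]
  field_simp

/-- Both sides equal `c ^ (a + b) * poissonWeight c (x - b)`, or vanish when `x < b`. -/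
lemma pow_mul_descFactorial_mul_poissonWeight_shift (c : ℝ) {x a b : ℕ} (h : b ≤ x + a) :
    c ^ b * ((x + a - b).descFactorial a * poissonWeight c (x + a - b))
      = c ^ a * (x.descFactorial b * poissonWeight c x) := by
  rcases le_or_gt b x with hbx | hxb
  · rw [descFactorial_mul_poissonWeight c (by omega), descFactorial_mul_poissonWeight c hbx,
      show x + a - b - a = x - b by omega]
    ring
  · simp [Nat.descFactorial_of_lt hxb, Nat.descFactorial_of_lt (show x + a - b < a by omega)]

lemma monPow_mul_descFactorialProd_mul_productPoisson_shift {d : ℕ} (c : Fin d → ℝ)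
    {x a b : Fin d → ℕ} (h : ∀ i, b i ≤ x i + a i) :
    monPow c b * (descFactorialProd (fun i => x i + a i - b i) a
        * productPoisson c (fun i => x i + a i - b i))
      = monPow c a * (descFactorialProd x b * productPoisson c x) := by
  simp only [monPow, descFactorialProd, productPoisson_eq_prod, ← Finset.prod_mul_distrib]
  exact Finset.prod_congr rfl fun i _ => pow_mul_descFactorial_mul_poissonWeight_shift _ (h i)

lemma intensity_eq_mul_descFactorialProd {d : ℕ} (κk : ℝ) (yk x : Fin d → ℕ) :
    intensity κk yk x = κk * descFactorialProd x yk := rfl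

lemma cmeRHS_productPoisson {d K : ℕ} (κ : Fin K → ℝ) (y y' : Fin K → Fin d → ℕ)
    {c : Fin d → ℝ} (hc : ∀ i, 0 < c i) (x : Fin d → ℕ) :
    (∑ k, if ∀ i, y' k i ≤ x i + y k i then
          intensity (κ k) (y k) (fun i => x i + y k i - y' k i)
            * productPoisson c (fun i => x i + y k i - y' k i)
        else 0)
      - ∑ k, intensity (κ k) (y k) x * productPoisson c x
    = productPoisson c x * ∑ k, κ k * monPow c (y k)
        * (descFactorialProd x (y' k) / monPow c (y' k)
          - descFactorialProd x (y k) / monPow c (y k)) := by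
  have hmon := monPow_ne_zero fun i => (hc i).ne'
  rw [Finset.mul_sum, ← Finset.sum_sub_distrib]
  refine Finset.sum_congr rfl fun k _ => ?_
  have hgain : (if ∀ i, y' k i ≤ x i + y k i then
        intensity (κ k) (y k) (fun i => x i + y k i - y' k i)
          * productPoisson c (fun i => x i + y k i - y' k i) else 0)
      = κ k * monPow c (y k) * (descFactorialProd x (y' k) * productPoisson c x)
          / monPow c (y' k) := by
    split_ifs with h
    · rw [eq_div_iff (hmon _), intensity_eq_mul_descFactorialProd]
      linear_combination κ k * monPow_mul_descFactorialProd_mul_productPoisson_shift c h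
    · push Not at h
      obtain ⟨i, hi⟩ := h
      rw [descFactorialProd_eq_zero_of_lt i (by omega)]
      simp
  rw [hgain, intensity_eq_mul_descFactorialProd]
  field_simp [hmon (y k), hmon (y' k)]

section Derivatives

variable {d : ℕ} {c : ℝ → Fin d → ℝ} {v : Fin d → ℝ} {s : Set ℝ} {t : ℝ}

lemma hasDerivWithinAt_poissonWeight {u : ℝ → ℝ} {u' : ℝ} (hu : HasDerivWithinAt u u' s t)
    (hut : u t ≠ 0) (n : ℕ) :
    HasDerivWithinAt (fun τ => poissonWeight (u τ) n)
      (poissonWeight (u t) n * (u' * (n / u t - 1))) s t := by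
  refine ((hu.neg.exp.mul (hu.pow n)).div_const _).congr_deriv ?_
  rcases n with _ | m
  · simp [poissonWeight]
  · simp only [poissonWeight, Pi.neg_apply, Pi.pow_apply, Nat.add_sub_cancel]
    field_simp
    push_cast
    ring

lemma hasDerivWithinAt_productPoisson (hc : HasDerivWithinAt c v s t) (hct : ∀ i, c t i ≠ 0)
    (x : Fin d → ℕ) :
    HasDerivWithinAt (fun τ => productPoisson (c τ) x)
      (productPoisson (c t) x * ∑ i, v i * (x i / c t i - 1)) s t := by
  have hfactor := fun i (_ : i ∈ Finset.univ) =>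
    hasDerivWithinAt_poissonWeight (hasDerivWithinAt_pi.1 hc i) (hct i) (x i)
  have hprod : (fun τ => productPoisson (c τ) x) = ∏ i, fun τ => poissonWeight (c τ i) (x i) := by
    ext τ
    simp [productPoisson_eq_prod]
  rw [hprod]
  refine (HasDerivWithinAt.finsetProd hfactor).congr_deriv ?_
  rw [Finset.mul_sum]
  refine Finset.sum_congr rfl fun i hi => ?_
  rw [productPoisson_eq_prod, ← Finset.mul_prod_erase _ _ hi, smul_eq_mul]
  ring

lemma productPoisson_single_one (c : Fin d → ℝ) (i : Fin d) :
    productPoisson c (Pi.single i 1) = c i * productPoisson c 0 := by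
  have hfactor : ∀ j, poissonWeight (c j) ((Pi.single i 1 : Fin d → ℕ) j)
      = (if j = i then c j else 1) * poissonWeight (c j) 0 := by
    intro j
    by_cases hj : j = i
    · subst hj; simp [poissonWeight]; ring
    · simp [hj]
  simp only [productPoisson_eq_prod, hfactor, Finset.prod_mul_distrib, Finset.prod_ite_eq',
    Finset.mem_univ, if_true, Pi.zero_apply]

lemma productPoisson_zero_pos (c : Fin d → ℝ) : 0 < productPoisson c 0 :=
  Finset.prod_pos fun i _ => by simp [Real.exp_pos]

/-- The parameters are recovered from the distribution as `c i = P(e_i) / P(0)`. -/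
lemma exists_hasDerivWithinAt_of_productPoisson
    (h : ∀ x, ∃ p, HasDerivWithinAt (fun τ => productPoisson (c τ) x) p s t) :
    ∃ v, HasDerivWithinAt c v s t := by
  obtain ⟨p₀, hp₀⟩ := h 0
  have hci : ∀ i, ∃ vi, HasDerivWithinAt (fun τ => c τ i) vi s t := by
    intro i
    obtain ⟨pᵢ, hpᵢ⟩ := h (Pi.single i 1)
    have hratio : ∀ τ, c τ i = productPoisson (c τ) (Pi.single i 1) / productPoisson (c τ) 0 :=
      fun τ => by
        rw [productPoisson_single_one, mul_div_cancel_right₀ _ (productPoisson_zero_pos _).ne']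
    exact ⟨_, (hpᵢ.div hp₀ (productPoisson_zero_pos _).ne').congr (fun τ _ => hratio τ) (hratio t)⟩
  choose v hv using hci
  exact ⟨v, hasDerivWithinAt_pi.2 hv⟩

end Derivatives

section NetProduction

variable {ρ α : Type*} [Fintype ρ]

noncomputable def netProduction (r : ρ → ℝ) (a b : ρ → α) : α →₀ ℝ :=
  ∑ k, r k • (Finsupp.single (b k) 1 - Finsupp.single (a k) 1)

lemma linearCombination_netProduction {M : Type*} [AddCommGroup M] [Module ℝ M] (φ : α → M)
    (r : ρ → ℝ) (a b : ρ → α) :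
    Finsupp.linearCombination ℝ φ (netProduction r a b) = ∑ k, r k • (φ (b k) - φ (a k)) := by
  simp [netProduction, map_sum, map_sub]

end NetProduction

section MassAction

variable {d K : ℕ} (κ : Fin K → ℝ) (y y' : Fin K → Fin d → ℕ)

lemma massActionRHS_eq_linearCombination (c : Fin d → ℝ) :
    massActionRHS κ y y' c = Finsupp.linearCombination ℝ (fun z i => (z i : ℝ))
      (netProduction (fun k => κ k * monPow c (y k)) y y') := by
  rw [linearCombination_netProduction]
  rfl

lemma sum_mul_gFun_sub_eq (c : Fin d → ℝ) (x : Fin d → ℕ) :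
    ∑ k, κ k * monPow c (y k) * (gFun x c (y' k) - gFun x c (y k))
      = ∑ i, massActionRHS κ y y' c i * (x i / c i - 1)
        - ∑ k, κ k * monPow c (y k) * (descFactorialProd x (y' k) / monPow c (y' k)
            - descFactorialProd x (y k) / monPow c (y k)) := by
  have hF : ∑ i, massActionRHS κ y y' c i * (x i / c i - 1)
      = ∑ k, κ k * monPow c (y k) * ∑ j, ((x j : ℝ) / c j - 1) * zetaVec (y k) (y' k) j := by
    simp only [massActionRHS, Finset.sum_apply, Pi.smul_apply, smul_eq_mul, Finset.sum_mul,
      Finset.mul_sum]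
    rw [Finset.sum_comm]
    exact Finset.sum_congr rfl fun k _ => Finset.sum_congr rfl fun j _ => by ring
  rw [hF, ← Finset.sum_sub_distrib]
  refine Finset.sum_congr rfl fun k _ => ?_
  simp only [gFun, zetaVec, descFactorialProd, div_eq_mul_inv, mul_sub, Finset.sum_sub_distrib]
  ring

/-- Linear independence of `x ↦ x^{(z)} / c^z` lets one compare the net production of every
complex with that of the reactions `0 → e_i` at rates `v i`. -/
theorem massActionRHS_eq_of_forall_sum_eq {c : Fin d → ℝ} (hc : ∀ i, c i ≠ 0) (v : Fin d → ℝ)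
    (H : ∀ x : Fin d → ℕ, ∑ i, v i * (x i / c i - 1)
      = ∑ k, κ k * monPow c (y k) * (descFactorialProd x (y' k) / monPow c (y' k)
          - descFactorialProd x (y k) / monPow c (y k))) :
    massActionRHS κ y y' c = v := by
  set ψ : (Fin d → ℕ) → (Fin d → ℕ) → ℝ := fun z x => descFactorialProd x z / monPow c z
  have hψ : LinearIndependent ℝ ψ := by
    convert linearIndependent_descFactorialProd.units_smul
      (fun z => Units.mk0 (monPow c z)⁻¹ (inv_ne_zero (monPow_ne_zero hc z))) using 1
    ext z x
    simp [ψ, div_eq_inv_mul]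
  have hnet : netProduction v (fun _ => 0) (fun i => Pi.single i 1)
      = netProduction (fun k => κ k * monPow c (y k)) y y' := by
    refine hψ ?_
    simp only [linearCombination_netProduction]
    ext x
    simpa [ψ, Finset.sum_apply, descFactorialProd_zero, descFactorialProd_single_one, monPow_zero,
      monPow_single_one, mul_assoc] using H x
  rw [massActionRHS_eq_linearCombination, ← hnet, linearCombination_netProduction]
  ext j
  simp [Finset.sum_apply, Pi.single_apply]

end MassAction

lemma gFun_eq_zero_of_sum_le_one {d : ℕ} (x z : Fin d → ℕ) (c : Fin d → ℝ)
    (hz : ∑ i, z i ≤ 1) : gFun x c z = 0 := by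
  rcases eq_zero_or_eq_single_one_of_sum_le_one hz with rfl | ⟨i, rfl⟩
  · simp [gFun, monPow_zero]
  · rw [gFun, ← descFactorialProd, descFactorialProd_single_one, monPow_single_one,
      Finset.sum_eq_single i (fun j _ hj => by simp [hj]) (by simp)]
    simp [div_eq_mul_inv]

lemma massAction_and_gBalance_of_solvesCME {d K : ℕ} {κ : Fin K → ℝ} {y y' : Fin K → Fin d → ℕ}
    {c : ℝ → Fin d → ℝ} (hCME : solvesCME κ y y' (fun x t => productPoisson (c t) x))
    {t : ℝ} (ht : 0 ≤ t) (hct : ∀ i, 0 < c t i) :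
    HasDerivWithinAt c (massActionRHS κ y y' (c t)) (Set.Ici 0) t ∧
      ∀ x, ∑ k, κ k * monPow (c t) (y k) * (gFun x (c t) (y' k) - gFun x (c t) (y k)) = 0 := by
  obtain ⟨v, hv⟩ := exists_hasDerivWithinAt_of_productPoisson fun x => ⟨_, hCME x t ht⟩
  have hsum : ∀ x : Fin d → ℕ, ∑ i, v i * (x i / c t i - 1)
      = ∑ k, κ k * monPow (c t) (y k) * (descFactorialProd x (y' k) / monPow (c t) (y' k)
          - descFactorialProd x (y k) / monPow (c t) (y k)) := by
    intro x
    have hderiv := (uniqueDiffOn_Ici 0 t ht).eq_deriv _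
      (hasDerivWithinAt_productPoisson hv (fun i => (hct i).ne') x) (hCME x t ht)
    rw [cmeRHS_productPoisson κ y y' hct] at hderiv
    exact mul_left_cancel₀ (productPoisson_pos hct x).ne' hderiv
  have hF := massActionRHS_eq_of_forall_sum_eq κ y y' (fun i => (hct i).ne') v hsum
  refine ⟨hF ▸ hv, fun x => ?_⟩
  rw [sum_mul_gFun_sub_eq, hF, hsum, sub_self]

end ProductPoissonCME

open ProductPoissonCME

theorem productPoisson_solvesCME_iff_massAction_and_gBalance
    {d K : ℕ} (κ : Fin K → ℝ) (y y' : Fin K → Fin d → ℕ)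
    (c : ℝ → Fin d → ℝ) (hcpos : ∀ t ≥ (0:ℝ), ∀ i, 0 < c t i) :
    (solvesCME κ y y' (fun x t => productPoisson (c t) x) ↔
      (solvesMassAction κ y y' c ∧
        ∀ x : Fin d → ℕ, ∀ t ≥ (0:ℝ),
          ∑ k, κ k * monPow (c t) (y k) * (gFun x (c t) (y' k) - gFun x (c t) (y k)) = 0))
    ∧ (∀ (x z : Fin d → ℕ) (cc : Fin d → ℝ), (∀ i, 0 < cc i) → (∑ i, z i) ≤ 1 →
        gFun x cc z = 0) := by
  refine ⟨⟨fun hCME => ?_, fun ⟨hMA, hbal⟩ x t ht => ?_⟩,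
    fun x z cc _ hz => gFun_eq_zero_of_sum_le_one x z cc hz⟩
  · have key := fun t (ht : t ≥ 0) => massAction_and_gBalance_of_solvesCME hCME ht (hcpos t ht)
    exact ⟨fun t ht => (key t ht).1, fun x t ht => (key t ht).2 x⟩
  · have hct := hcpos t ht
    refine (hasDerivWithinAt_productPoisson (hMA t ht) (fun i => (hct i).ne') x).congr_deriv ?_
    rw [cmeRHS_productPoisson κ y y' hct,
      sub_eq_zero.1 ((sum_mul_gFun_sub_eq κ y y' (c t) x).symm.trans (hbal x t ht))]
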